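/- arXiv:1710.00674 — 3 statements merged into one kernel-verified Lean document; each statement's English description precedes it below -/
import Mathlib

section
/- Let U ⊆ ℝ³ be open, let f, g, h, P, Q, T : U → ℝ be continuously differentiable with T nonvanishing on U, and let I : U → ℝ be twice continuously differentiable with ∂I/∂x = −(Q·T)·g − (P·T)·h, ∂I/∂y = (Q·T)·f and ∂I/∂z = (P·T)·f on U. Then, writing D[F] = f·∂F/∂x + g·∂F/∂y + h·∂F/∂z, the identity f·Q·D[T]/T = −f·D[Q] − Q·(f·∂f/∂x + f·∂g/∂y + h·∂f/∂z) − P·(f·∂h/∂y − h·∂f/∂y) holds on U. -/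
/-- Partial derivative in the `x` direction of a function on `ℝ³`. -/
noncomputable def pdX (F : ℝ × ℝ × ℝ → ℝ) (p : ℝ × ℝ × ℝ) : ℝ :=
  fderiv ℝ F p (1, 0, 0)

/-- Partial derivative in the `y` direction. -/
noncomputable def pdY (F : ℝ × ℝ × ℝ → ℝ) (p : ℝ × ℝ × ℝ) : ℝ :=
  fderiv ℝ F p (0, 1, 0)

/-- Partial derivative in the `z` direction. -/
noncomputable def pdZ (F : ℝ × ℝ × ℝ → ℝ) (p : ℝ × ℝ × ℝ) : ℝ :=
  fderiv ℝ F p (0, 0, 1)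

/-- The Darboux operator `D = f·∂ₓ + g·∂ᵧ + h·∂_z` applied to `F`. -/
noncomputable def Dop (f g h F : ℝ × ℝ × ℝ → ℝ) (p : ℝ × ℝ × ℝ) : ℝ :=
  f p * pdX F p + g p * pdY F p + h p * pdZ F p

/-!
Write `r = Q·T` and `s = P·T`, so that `dI = r (g dx − f dy) + s (h dx − f dz)`. Equality of the
mixed partials `I_xy = I_yx` and `I_yz = I_zy` gives two integrability conditions on `r` and `s`;
their combination with weights `f` and `h` is `f·D[r] + r (f f_x + f g_y + h f_z) + s (f h_y − h f_y) = 0`,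
and expanding `D[Q·T] = T·D[Q] + Q·D[T]` and dividing by `T` gives the identity.
-/

section NormedSpace

variable {E F : Type*} [NormedAddCommGroup E] [NormedSpace ℝ E]
  [NormedAddCommGroup F] [NormedSpace ℝ F]

theorem ContDiffAt.fderiv_fderiv_apply_comm {I : E → F} {p : E} (hI : ContDiffAt ℝ 2 I p)
    (v w : E) :
    fderiv ℝ (fun q => fderiv ℝ I q v) p w = fderiv ℝ (fun q => fderiv ℝ I q w) p v := by
  have hd : DifferentiableAt ℝ (fderiv ℝ I) p :=
    (hI.fderiv_right (m := 1) le_rfl).differentiableAt one_ne_zero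
  have hcurry (u : E) : fderiv ℝ (fun q => fderiv ℝ I q u) p = (fderiv ℝ (fderiv ℝ I) p).flip u := by
    simpa using fderiv_clm_apply hd (differentiableAt_const u)
  rw [hcurry, hcurry]
  exact (hI.isSymmSndFDerivAt minSmoothness_of_isRCLikeNormedField.le).eq w v

theorem fderiv_apply_comm_of_eqOn_fderiv {U : Set E} (hU : IsOpen U) {I : E → F} {A B : E → F}
    (hI : ContDiffOn ℝ 2 I U) {v w : E}
    (hA : ∀ q ∈ U, fderiv ℝ I q v = A q) (hB : ∀ q ∈ U, fderiv ℝ I q w = B q)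
    {p : E} (hp : p ∈ U) :
    fderiv ℝ A p w = fderiv ℝ B p v := by
  have hU' : U ∈ nhds p := hU.mem_nhds hp
  have hA' : (fun q => fderiv ℝ I q v) =ᶠ[nhds p] A := Filter.eventually_of_mem hU' hA
  have hB' : (fun q => fderiv ℝ I q w) =ᶠ[nhds p] B := Filter.eventually_of_mem hU' hB
  rw [← hA'.fderiv_eq, ← hB'.fderiv_eq]
  exact (hI.contDiffAt hU').fderiv_fderiv_apply_comm v w

theorem fderiv_fun_mul_apply {G H : E → ℝ} {p : E} (hG : DifferentiableAt ℝ G p)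
    (hH : DifferentiableAt ℝ H p) (v : E) :
    fderiv ℝ (fun q => G q * H q) p v = fderiv ℝ G p v * H p + G p * fderiv ℝ H p v := by
  rw [fderiv_fun_mul hG hH]
  simp only [add_apply, smul_apply, smul_eq_mul]
  ring

end NormedSpace

section Darboux

variable {f g h : ℝ × ℝ × ℝ → ℝ} {p : ℝ × ℝ × ℝ}

theorem Dop_mul {G H : ℝ × ℝ × ℝ → ℝ} (hG : DifferentiableAt ℝ G p)
    (hH : DifferentiableAt ℝ H p) :
    Dop f g h (fun q => G q * H q) p = Dop f g h G p * H p + G p * Dop f g h H p := by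
  simp only [Dop, pdX, pdY, pdZ, fderiv_fun_mul_apply hG hH]
  ring

theorem Dop_add_eq_zero_of_integrable {r s : ℝ × ℝ × ℝ → ℝ}
    (hf : DifferentiableAt ℝ f p) (hg : DifferentiableAt ℝ g p) (hh : DifferentiableAt ℝ h p)
    (hr : DifferentiableAt ℝ r p) (hs : DifferentiableAt ℝ s p)
    (hxy : pdY (fun q => -r q * g q - s q * h q) p = pdX (fun q => r q * f q) p)
    (hzy : pdZ (fun q => r q * f q) p = pdY (fun q => s q * f q) p) :
    f p * Dop f g h r p + r p * (f p * pdX f p + f p * pdY g p + h p * pdZ f p)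
      + s p * (f p * pdY h p - h p * pdY f p) = 0 := by
  simp only [pdX, pdY, pdZ] at hxy hzy ⊢
  rw [fderiv_fun_sub (hr.fun_neg.fun_mul hg) (hs.fun_mul hh), sub_apply,
    fderiv_fun_mul_apply hr.fun_neg hg, fderiv_fun_neg, neg_apply,
    fderiv_fun_mul_apply hs hh, fderiv_fun_mul_apply hr hf] at hxy
  rw [fderiv_fun_mul_apply hr hf, fderiv_fun_mul_apply hs hf] at hzy
  simp only [Dop, pdX, pdY, pdZ]
  linear_combination -(f p * hxy) + h p * hzy

end Darboux

/-- Second compatibility identity (equation (QDr3)):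
`f·Q·D[T]/T = −f·D[Q] − Q·(f·f_x + f·g_y + h·f_z) − P·(f·h_y − h·f_y)`. -/
theorem compatibility_identity_Q
    (U : Set (ℝ × ℝ × ℝ)) (hU : IsOpen U)
    (f g h P Q T I : ℝ × ℝ × ℝ → ℝ)
    (hf : ContDiffOn ℝ 1 f U) (hg : ContDiffOn ℝ 1 g U) (hh : ContDiffOn ℝ 1 h U)
    (hP : ContDiffOn ℝ 1 P U) (hQ : ContDiffOn ℝ 1 Q U) (hT : ContDiffOn ℝ 1 T U)
    (hTne : ∀ p ∈ U, T p ≠ 0)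
    (hI : ContDiffOn ℝ 2 I U)
    (hIx : ∀ p ∈ U, pdX I p = -(Q p * T p) * g p - (P p * T p) * h p)
    (hIy : ∀ p ∈ U, pdY I p = (Q p * T p) * f p)
    (hIz : ∀ p ∈ U, pdZ I p = (P p * T p) * f p) :
    ∀ p ∈ U,
      f p * Q p * Dop f g h T p / T p =
        -(f p * Dop f g h Q p)
          - Q p * (f p * pdX f p + f p * pdY g p + h p * pdZ f p)
          - P p * (f p * pdY h p - h p * pdY f p) := by
  intro p hp
  have hdiff {F : ℝ × ℝ × ℝ → ℝ} (hF : ContDiffOn ℝ 1 F U) : DifferentiableAt ℝ F p :=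
    (hF.contDiffAt (hU.mem_nhds hp)).differentiableAt one_ne_zero
  have hxy := fderiv_apply_comm_of_eqOn_fderiv hU hI hIx hIy hp
  have hzy := fderiv_apply_comm_of_eqOn_fderiv hU hI hIz hIy hp
  have hrs := Dop_add_eq_zero_of_integrable (r := fun q => Q q * T q) (s := fun q => P q * T q)
    (hdiff hf) (hdiff hg) (hdiff hh) ((hdiff hQ).mul (hdiff hT)) ((hdiff hP).mul (hdiff hT))
    hxy hzy.symm
  rw [Dop_mul (hdiff hQ) (hdiff hT)] at hrs
  field_simp [hTne p hp]
  linear_combination hrs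
end

section
/- Let p₁, p₂ be real polynomials in one variable, let M, N : ℝ³ → ℝ be continuous, and set φ(x) = exp(p₁(x)/p₂(x)) for p₂(x) ≠ 0. Let I : ℝ³ → ℝ be differentiable such that for all (x, y) with p₂(x) ≠ 0, writing u = φ(x): p₂(x)²·N(x,y,u)·∂I/∂x(x,y,u) + p₂(x)²·M(x,y,u)·∂I/∂y(x,y,u) + N(x,y,u)·(p₁'(x)·p₂(x) − p₁(x)·p₂'(x))·u·∂I/∂z(x,y,u) = 0. If J ⊆ ℝ is an interval and y : J → ℝ is differentiable with p₂(x) ≠ 0, N(x, y(x), φ(x)) ≠ 0 and y'(x) = M(x, y(x), φ(x))/N(x, y(x), φ(x)) for all x ∈ J, then x ↦ I(x, y(x), exp(p₁(x)/p₂(x))) is constant on J. -/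
theorem fderiv_apply_eq_pdX_add_pdY_add_pdZ (F : ℝ × ℝ × ℝ → ℝ) (p : ℝ × ℝ × ℝ)
    (a b c : ℝ) :
    fderiv ℝ F p (a, b, c) = a * pdX F p + b * pdY F p + c * pdZ F p := by
  have hsplit : ((a, b, c) : ℝ × ℝ × ℝ) = a • (1, 0, 0) + b • (0, 1, 0) + c • (0, 0, 1) := by
    simp
  rw [hsplit, map_add, map_add, map_smul, map_smul, map_smul]
  rfl

theorem DifferentiableAt.hasDerivAt_comp_prodMk {F : ℝ × ℝ × ℝ → ℝ} {f g : ℝ → ℝ} {f' g' x : ℝ}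
    (hF : DifferentiableAt ℝ F (x, f x, g x)) (hf : HasDerivAt f f' x)
    (hg : HasDerivAt g g' x) :
    HasDerivAt (fun t => F (t, f t, g t))
      (pdX F (x, f x, g x) + f' * pdY F (x, f x, g x) + g' * pdZ F (x, f x, g x)) x := by
  have hcurve : HasDerivAt (fun t => ((t, f t, g t) : ℝ × ℝ × ℝ)) (1, f', g') x :=
    (hasDerivAt_id x).prodMk (hf.prodMk hg)
  simpa only [Function.comp_def, fderiv_apply_eq_pdX_add_pdY_add_pdZ, one_mul] using
    hF.hasFDerivAt.comp_hasDerivAt x hcurve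

theorem Polynomial.hasDerivAt_exp_eval_div_eval (p₁ p₂ : Polynomial ℝ) {x : ℝ}
    (hx : p₂.eval x ≠ 0) :
    HasDerivAt (fun t => Real.exp (p₁.eval t / p₂.eval t))
      (Real.exp (p₁.eval x / p₂.eval x)
        * (((derivative p₁).eval x * p₂.eval x - p₁.eval x * (derivative p₂).eval x)
          / p₂.eval x ^ 2)) x :=
  ((p₁.hasDerivAt x).div (p₂.hasDerivAt x) hx).exp

theorem Convex.eq_of_forall_hasDerivWithinAt_zero {E : Type*} [NormedAddCommGroup E]
    [NormedSpace ℝ E] {f : ℝ → E} {s : Set ℝ} (hs : Convex ℝ s)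
    (hf : ∀ x ∈ s, HasDerivWithinAt f 0 s x) {a b : ℝ} (ha : a ∈ s) (hb : b ∈ s) :
    f a = f b := by
  have hbound := hs.norm_image_sub_le_of_norm_hasDerivWithin_le (C := 0) hf
    (fun _ _ => norm_zero.le) hb ha
  rw [zero_mul, norm_le_zero_iff, sub_eq_zero] at hbound
  exact hbound

theorem invariant_of_1ode_with_exp_of_rational_general
    (p₁ p₂ : Polynomial ℝ)
    (M N : ℝ × ℝ × ℝ → ℝ)
    (I : ℝ × ℝ × ℝ → ℝ) (hI : Differentiable ℝ I)
    (hpde : ∀ x y : ℝ, p₂.eval x ≠ 0 →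
      ∀ u : ℝ, u = Real.exp (p₁.eval x / p₂.eval x) →
        (p₂.eval x) ^ 2 * N (x, y, u) * pdX I (x, y, u)
          + (p₂.eval x) ^ 2 * M (x, y, u) * pdY I (x, y, u)
          + N (x, y, u)
              * ((Polynomial.derivative p₁).eval x * p₂.eval x
                  - p₁.eval x * (Polynomial.derivative p₂).eval x)
              * u * pdZ I (x, y, u) = 0)
    (J : Set ℝ) (hJ : J.OrdConnected) (y : ℝ → ℝ)
    (hp₂ : ∀ x ∈ J, p₂.eval x ≠ 0)
    (hNne : ∀ x ∈ J, N (x, y x, Real.exp (p₁.eval x / p₂.eval x)) ≠ 0)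
    (hy : ∀ x ∈ J,
      HasDerivAt y
        (M (x, y x, Real.exp (p₁.eval x / p₂.eval x))
          / N (x, y x, Real.exp (p₁.eval x / p₂.eval x))) x) :
    ∀ a ∈ J, ∀ b ∈ J,
      I (a, y a, Real.exp (p₁.eval a / p₂.eval a))
        = I (b, y b, Real.exp (p₁.eval b / p₂.eval b)) := by
  intro a ha b hb
  refine hJ.convex.eq_of_forall_hasDerivWithinAt_zero
    (f := fun x => I (x, y x, Real.exp (p₁.eval x / p₂.eval x))) (fun x hx => ?_) ha hb
  have hderiv := hI.differentiableAt.hasDerivAt_comp_prodMk (hy x hx)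
    (Polynomial.hasDerivAt_exp_eval_div_eval p₁ p₂ (hp₂ x hx))
  convert hderiv.hasDerivWithinAt using 1
  have hq := hp₂ x hx
  have hn := hNne x hx
  rw [← mul_right_inj' (mul_ne_zero (pow_ne_zero 2 hq) hn), mul_zero,
    ← hpde x (y x) hq _ rfl]
  field_simp

/-- A first integral of the polynomial 3D system (with numerator and denominator
redefined by the factor `p₂²`) associated with the 1ODE
`dy/dx = M(x, y, u)/N(x, y, u)` presenting `u = exp(p₁(x)/p₂(x))`
is constant along solutions of the 1ODE. -/
theorem invariant_of_1ode_with_exp_of_rational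
    (p₁ p₂ : Polynomial ℝ)
    (M N : ℝ × ℝ × ℝ → ℝ) (hM : Continuous M) (hN : Continuous N)
    (I : ℝ × ℝ × ℝ → ℝ) (hI : Differentiable ℝ I)
    (hpde : ∀ x y : ℝ, p₂.eval x ≠ 0 →
      ∀ u : ℝ, u = Real.exp (p₁.eval x / p₂.eval x) →
        (p₂.eval x) ^ 2 * N (x, y, u) * pdX I (x, y, u)
          + (p₂.eval x) ^ 2 * M (x, y, u) * pdY I (x, y, u)
          + N (x, y, u)
              * ((Polynomial.derivative p₁).eval x * p₂.eval x
                  - p₁.eval x * (Polynomial.derivative p₂).eval x)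
              * u * pdZ I (x, y, u) = 0)
    (J : Set ℝ) (hJ : J.OrdConnected) (y : ℝ → ℝ)
    (hp₂ : ∀ x ∈ J, p₂.eval x ≠ 0)
    (hNne : ∀ x ∈ J, N (x, y x, Real.exp (p₁.eval x / p₂.eval x)) ≠ 0)
    (hy : ∀ x ∈ J,
      HasDerivAt y
        (M (x, y x, Real.exp (p₁.eval x / p₂.eval x))
          / N (x, y x, Real.exp (p₁.eval x / p₂.eval x))) x) :
    ∀ a ∈ J, ∀ b ∈ J,
      I (a, y a, Real.exp (p₁.eval a / p₂.eval a))
        = I (b, y b, Real.exp (p₁.eval b / p₂.eval b)) :=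
  invariant_of_1ode_with_exp_of_rational_general p₁ p₂ M N I hI hpde J hJ y hp₂ hNne hy
end

section
/- Let J ⊆ ℝ be an interval and y : J → ℝ be differentiable such that for all x ∈ J: x ≠ 0, y(x) ≠ 0, cos((x − y(x))/(x·y(x))) ≠ 0, and y'(x) = ((tan((x−y(x))/(x·y(x))))² − x·tan((x−y(x))/(x·y(x))) + x·y(x) + 1)·y(x)²/(x²·((tan((x−y(x))/(x·y(x))))² + y(x)² + 1)). Then the function x ↦ (y(x) − tan((x − y(x))/(x·y(x))))/x is constant on J. -/
/-!
With `θ = (x - y)/(x y) = 1/y - 1/x` and `T = tan θ` one has `θ' = 1/x² - y'/y²` and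
`T' = (1 + T²) θ'`. The right-hand side `y'` of the equation is exactly the value for which
`y' - (1 + T²) θ' = (y - T)/x`, i.e. `(y - T)' = (y - T)/x`, so `(y - T)/x` has derivative zero.
-/

open Real

theorem Convex.eq_of_hasDerivWithinAt_eq_zero {𝕜 G : Type*} [RCLike 𝕜] [NormedAddCommGroup G]
    [NormedSpace 𝕜 G] {f : 𝕜 → G} {s : Set 𝕜} {a b : 𝕜} (hs : Convex ℝ s)
    (hf : ∀ x ∈ s, HasDerivWithinAt f 0 s x) (ha : a ∈ s) (hb : b ∈ s) : f a = f b := by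
  have h := hs.norm_image_sub_le_of_norm_hasDerivWithin_le hf (fun _ _ => norm_zero.le) hb ha
  rwa [zero_mul, norm_le_zero_iff, sub_eq_zero] at h

theorem HasDerivAt.tan {f : ℝ → ℝ} {f' x : ℝ} (hf : HasDerivAt f f' x)
    (hc : Real.cos (f x) ≠ 0) :
    HasDerivAt (fun z => Real.tan (f z)) ((1 + Real.tan (f x) ^ 2) * f') x := by
  have h := (Real.hasDerivAt_tan hc).comp x hf
  rwa [one_div, ← inv_one_add_tan_sq hc, inv_inv] at h

theorem HasDerivAt.id_sub_div_id_mul {y : ℝ → ℝ} {d x : ℝ} (hy : HasDerivAt y d x)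
    (hx : x ≠ 0) (hyx : y x ≠ 0) :
    HasDerivAt (fun z => (z - y z) / (z * y z)) (1 / x ^ 2 - d / y x ^ 2) x := by
  refine (((hasDerivAt_id x).sub hy).div ((hasDerivAt_id x).mul hy)
    (mul_ne_zero hx hyx)).congr_deriv ?_
  simp only [Pi.mul_apply, Pi.sub_apply, id]
  field_simp
  ring

/-- The right-hand side of the equation, with `T` in place of `tan ((x - y)/(x y))`. -/
noncomputable def trigRhs (x y T : ℝ) : ℝ :=
  (T ^ 2 - x * T + x * y + 1) * y ^ 2 / (x ^ 2 * (T ^ 2 + y ^ 2 + 1))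

theorem trigRhs_sub_one_add_sq_mul {x y : ℝ} (T : ℝ) (hx : x ≠ 0) (hy : y ≠ 0) :
    trigRhs x y T - (1 + T ^ 2) * (1 / x ^ 2 - trigRhs x y T / y ^ 2) = (y - T) / x := by
  have hden : T ^ 2 + y ^ 2 + 1 ≠ 0 := by positivity
  unfold trigRhs
  field_simp
  ring

theorem hasDerivAt_invariant_eq_zero {y : ℝ → ℝ} {x : ℝ} (hx : x ≠ 0) (hyx : y x ≠ 0)
    (hc : cos ((x - y x) / (x * y x)) ≠ 0)
    (hy : HasDerivAt y (trigRhs x (y x) (tan ((x - y x) / (x * y x)))) x) :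
    HasDerivAt (fun z => (y z - tan ((z - y z) / (z * y z))) / z) 0 x := by
  have hT := (hy.id_sub_div_id_mul hx hyx).tan hc
  refine ((hy.sub hT).div (hasDerivAt_id x) hx).congr_deriv ?_
  rw [trigRhs_sub_one_add_sq_mul _ hx hyx, id, div_mul_cancel₀ _ hx, Pi.sub_apply, mul_one,
    sub_self, zero_div]

/-- Along any solution of the 1ODE
`y' = ((tan((x−y)/(xy)))² − x·tan((x−y)/(xy)) + x·y + 1)·y²
      /(x²·((tan((x−y)/(xy)))² + y² + 1))`,
the quantity `(y − tan((x−y)/(xy)))/x` is constant. -/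
theorem invariant_constant_trig_1ode
    (J : Set ℝ) (hJ : J.OrdConnected) (y : ℝ → ℝ)
    (hx0 : ∀ x ∈ J, x ≠ 0)
    (hy0 : ∀ x ∈ J, y x ≠ 0)
    (hcos : ∀ x ∈ J, Real.cos ((x - y x) / (x * y x)) ≠ 0)
    (hy : ∀ x ∈ J,
      HasDerivAt y
        (((Real.tan ((x - y x) / (x * y x))) ^ 2
            - x * Real.tan ((x - y x) / (x * y x)) + x * y x + 1) * (y x) ^ 2
          / (x ^ 2 * ((Real.tan ((x - y x) / (x * y x))) ^ 2 + (y x) ^ 2 + 1))) x) :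
    ∀ a ∈ J, ∀ b ∈ J,
      (y a - Real.tan ((a - y a) / (a * y a))) / a
        = (y b - Real.tan ((b - y b) / (b * y b))) / b := fun _ ha _ hb =>
  hJ.convex.eq_of_hasDerivWithinAt_eq_zero
    (fun x hx => (hasDerivAt_invariant_eq_zero (hx0 x hx) (hy0 x hx) (hcos x hx)
      (hy x hx)).hasDerivWithinAt) ha hb
end
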